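/- arXiv:2403.19525 — 3 statements merged into one kernel-verified Lean document; each statement's English description precedes it below -/
import Mathlib

section
/- Let Γ be closed under par-substitutions (substitutions mapping every variable to a parameter) and suppose A ∈ Γ; further assume par is infinite. Then the following are equivalent: (1) ⊢ᵢ A → B; (2) A is Γ-admissible to B (for every variable-free E ∈ Γ and substitution θ, ⊢ᵢ E → θ(A) implies ⊢ᵢ E → θ(B)); (3) A Γ-projectively preserves B (for every Γ-projective formula F, ⊢ᵢ F → A implies ⊢ᵢ F → B). -/
inductive Form (var par : Type) : Type where
  | bot : Form var par
  | v : var → Form var par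
  | p : par → Form var par
  | and : Form var par → Form var par → Form var par
  | or : Form var par → Form var par → Form var par
  | imp : Form var par → Form var par → Form var par

namespace Form
variable {var par : Type}

def neg (A : Form var par) : Form var par := A.imp .bot
def top : Form var par := Form.neg .bot
def fiff (A B : Form var par) : Form var par := (A.imp B).and (B.imp A)

/-- `varFree A`: `A` contains no variables (it lies in the parameter-only sublanguage). -/
def varFree : Form var par → Prop
  | .bot => True
  | .v _ => False
  | .p _ => True
  | .and A B => varFree A ∧ varFree B
  | .or A B => varFree A ∧ varFree B
  | .imp A B => varFree A ∧ varFree B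

/-- Substitutions act on variables, fix parameters, and commute with connectives. -/
def subst (θ : var → Form var par) : Form var par → Form var par
  | .bot => .bot
  | .v x => θ x
  | .p q => .p q
  | .and A B => (subst θ A).and (subst θ B)
  | .or A B => (subst θ A).or (subst θ B)
  | .imp A B => (subst θ A).imp (subst θ B)

end Form

/-- Hilbert-style provability: `cl = false` is intuitionistic logic (IPC),
`cl = true` is classical logic (CPC). -/
inductive Prv {var par : Type} (cl : Bool) : Form var par → Prop where
  | mp {A B : Form var par} : Prv cl (A.imp B) → Prv cl A → Prv cl B
  | k {A B : Form var par} : Prv cl (A.imp (B.imp A))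
  | s {A B C : Form var par} :
      Prv cl ((A.imp (B.imp C)).imp ((A.imp B).imp (A.imp C)))
  | andI {A B : Form var par} : Prv cl (A.imp (B.imp (A.and B)))
  | andE1 {A B : Form var par} : Prv cl ((A.and B).imp A)
  | andE2 {A B : Form var par} : Prv cl ((A.and B).imp B)
  | orI1 {A B : Form var par} : Prv cl (A.imp (A.or B))
  | orI2 {A B : Form var par} : Prv cl (B.imp (A.or B))
  | orE {A B C : Form var par} :
      Prv cl ((A.imp C).imp ((B.imp C).imp ((A.or B).imp C)))
  | exf {A : Form var par} : Prv cl (Form.bot.imp A)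
  | dne {A : Form var par} : cl = true → Prv cl (A.neg.neg.imp A)

/-- `U` is the uniform post-interpolant of `A` with respect to the parameters. -/
def IsUPI {var par : Type} (cl : Bool) (A U : Form var par) : Prop :=
  U.varFree ∧ Prv cl (A.imp U) ∧
    ∀ C : Form var par, C.varFree → Prv cl (A.imp C) → Prv cl (U.imp C)

/-- `F` is `Γ`-projective. -/
def GammaProjective {var par : Type} (Γ : Set (Form var par)) (F : Form var par) : Prop :=
  ∃ (θ : var → Form var par) (E : Form var par), E ∈ Γ ∧ E.varFree ∧
    (∀ x : var, Prv false (F.imp ((θ x).fiff (Form.v x)))) ∧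
    Prv false ((Form.subst θ F).fiff E)

/-!
The converse directions rename the variables of `A → B` injectively to parameters not occurring
in it; since provability is closed under substituting formulas for parameters, the renaming can be
undone. For admissibility, take `E` to be the renamed `A` and `θ` the renaming itself. For
projective preservation, take `F := A ∧ ⋀ᵢ (pᵢ ↔ xᵢ)`: it is `Γ`-projective via `xᵢ ↦ pᵢ`, and
undoing the renaming turns its conjuncts into tautologies, so `⊢ F → B` becomes `⊢ A → B`.
-/

namespace Form
variable {var par : Type}

def bind (σ : var → Form var par) (τ : par → Form var par) : Form var par → Form var par
  | .bot => .bot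
  | .v x => σ x
  | .p q => τ q
  | .and A B => (bind σ τ A).and (bind σ τ B)
  | .or A B => (bind σ τ A).or (bind σ τ B)
  | .imp A B => (bind σ τ A).imp (bind σ τ B)

def vars : Form var par → List var
  | .bot => []
  | .v x => [x]
  | .p _ => []
  | .and A B | .or A B | .imp A B => vars A ++ vars B

def pars : Form var par → List par
  | .bot => []
  | .v _ => []
  | .p q => [q]
  | .and A B | .or A B | .imp A B => pars A ++ pars B

def conj : List (Form var par) → Form var par
  | [] => top
  | A :: L => A.and (conj L)

theorem subst_eq_bind (θ : var → Form var par) (A : Form var par) :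
    A.subst θ = A.bind θ .p := by
  induction A <;> simp_all [subst, bind]

theorem bind_v_p (A : Form var par) : A.bind .v .p = A := by
  induction A <;> simp_all [bind]

theorem bind_bind (σ σ' : var → Form var par) (τ τ' : par → Form var par) (A : Form var par) :
    (A.bind σ τ).bind σ' τ' = A.bind (fun x => (σ x).bind σ' τ') (fun q => (τ q).bind σ' τ') := by
  induction A <;> simp_all [bind]

theorem bind_congr {σ σ' : var → Form var par} {τ τ' : par → Form var par} {A : Form var par}
    (hσ : ∀ x ∈ A.vars, σ x = σ' x) (hτ : ∀ q ∈ A.pars, τ q = τ' q) :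
    A.bind σ τ = A.bind σ' τ' := by
  induction A <;> simp_all [bind, vars, pars]

theorem bind_conj (σ : var → Form var par) (τ : par → Form var par) (L : List (Form var par)) :
    (conj L).bind σ τ = conj (L.map (bind σ τ)) := by
  induction L <;> simp_all [conj, bind, top, neg]

theorem varFree_subst_params (f : var → par) (A : Form var par) :
    (A.subst fun x => .p (f x)).varFree := by
  induction A <;> simp_all [subst, varFree]

theorem exists_renaming [Infinite par] (G : Form var par) :
    ∃ (f : var → par) (ρ : par → Form var par),
      (∀ x ∈ G.vars, ρ (f x) = .v x) ∧ ∀ q ∈ G.pars, ρ q = .p q := by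
  classical
  obtain ⟨f, hfresh, hinj⟩ := (List.finite_toSet G.vars).exists_injOn_of_encard_le
    (t := {q | q ∈ G.pars}ᶜ) (by simp [(List.finite_toSet G.pars).infinite_compl])
  refine ⟨f, fun q => if h : ∃ x ∈ G.vars, f x = q then .v h.choose else .p q, ?_, ?_⟩
  · intro x hx
    have h : ∃ y ∈ G.vars, f y = f x := ⟨x, hx, rfl⟩
    dsimp only
    rw [dif_pos h, hinj h.choose_spec.1 hx h.choose_spec.2]
  · rintro q hq
    dsimp only
    rw [dif_neg]
    rintro ⟨x, hx, rfl⟩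
    exact hfresh hx hq

def pinned (f : var → par) (A : Form var par) : Form var par :=
  A.and (conj (A.vars.map fun x => (Form.p (f x)).fiff (.v x)))

end Form

namespace Prv
open Form
variable {var par : Type} {cl : Bool}

theorem imp_self (A : Form var par) : Prv cl (A.imp A) :=
  mp (mp (s (B := A.imp A)) k) k

theorem weaken {A B : Form var par} (h : Prv cl B) : Prv cl (A.imp B) :=
  mp k h

theorem imp_trans {A B C : Form var par} (h₁ : Prv cl (A.imp B)) (h₂ : Prv cl (B.imp C)) :
    Prv cl (A.imp C) :=
  mp (mp s (weaken h₂)) h₁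

theorem and_intro {A B : Form var par} (hA : Prv cl A) (hB : Prv cl B) : Prv cl (A.and B) :=
  mp (mp andI hA) hB

theorem imp_and {A B C : Form var par} (hB : Prv cl (A.imp B)) (hC : Prv cl (A.imp C)) :
    Prv cl (A.imp (B.and C)) :=
  mp (mp s (imp_trans hB andI)) hC

theorem fiff_self (A : Form var par) : Prv cl (A.fiff A) :=
  and_intro (imp_self A) (imp_self A)

theorem conj {L : List (Form var par)} (h : ∀ A ∈ L, Prv cl A) : Prv cl (Form.conj L) := by
  induction L with
  | nil => exact imp_self .bot
  | cons A L ih => exact and_intro (h A (by simp)) (ih fun B hB => h B (by simp [hB]))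

theorem conj_imp_of_mem {L : List (Form var par)} {A : Form var par} (hA : A ∈ L) :
    Prv cl ((Form.conj L).imp A) := by
  induction L with
  | nil => simp at hA
  | cons B L ih =>
    rcases List.mem_cons.mp hA with rfl | hA
    · exact andE1
    · exact imp_trans andE2 (ih hA)

theorem bind (σ : var → Form var par) (τ : par → Form var par) {A : Form var par}
    (h : Prv cl A) : Prv cl (A.bind σ τ) := by
  induction h with
  | mp _ _ ih₁ ih₂ => exact mp ih₁ ih₂
  | k => exact k
  | s => exact s
  | andI => exact andI
  | andE1 => exact andE1
  | andE2 => exact andE2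
  | orI1 => exact orI1
  | orI2 => exact orI2
  | orE => exact orE
  | exf => exact exf
  | dne h => exact dne h

theorem subst (θ : var → Form var par) {A : Form var par} (h : Prv cl A) :
    Prv cl (A.subst θ) := by
  rw [subst_eq_bind]
  exact h.bind θ .p

theorem of_subst_renaming {f : var → par} {ρ : par → Form var par} {G : Form var par}
    (hv : ∀ x ∈ G.vars, ρ (f x) = .v x) (hp : ∀ q ∈ G.pars, ρ q = .p q)
    (h : Prv cl (G.subst fun x => .p (f x))) : Prv cl G := by
  have h' := h.bind .v ρ
  rw [subst_eq_bind, bind_bind] at h'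
  simp only [Form.bind] at h'
  rwa [bind_congr (σ' := .v) (τ' := .p) hv hp, bind_v_p] at h'

theorem of_pinned_imp {f : var → par} {ρ : par → Form var par} {A B : Form var par}
    (hv : ∀ x ∈ A.vars, ρ (f x) = .v x) (hp : ∀ q ∈ (A.imp B).pars, ρ q = .p q)
    (h : Prv cl ((pinned f A).imp B)) : Prv cl (A.imp B) := by
  have h' := h.bind .v ρ
  simp only [pinned, Form.bind, bind_conj, List.map_map] at h'
  rw [bind_congr (σ' := .v) (τ' := .p) (A := A) (fun _ _ => rfl)
      (fun q hq => hp q (by simp [pars, hq])),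
    bind_congr (σ' := .v) (τ' := .p) (A := B) (fun _ _ => rfl)
      (fun q hq => hp q (by simp [pars, hq])), bind_v_p, bind_v_p] at h'
  refine imp_trans (imp_and (imp_self A) (weaken (conj ?_))) h'
  simp only [List.mem_map, Function.comp_apply, Form.fiff, Form.bind]
  rintro _ ⟨x, hx, rfl⟩
  rw [hv x hx]
  exact fiff_self _

end Prv

section Gamma
open Form
variable {var par : Type}

def ParSubstClosed (Γ : Set (Form var par)) : Prop :=
  ∀ A ∈ Γ, ∀ θ : var → Form var par, (∀ x : var, ∃ q : par, θ x = .p q) → A.subst θ ∈ Γ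

def GammaAdmissible (Γ : Set (Form var par)) (A B : Form var par) : Prop :=
  ∀ E ∈ Γ, E.varFree → ∀ θ : var → Form var par,
    Prv false (E.imp (A.subst θ)) → Prv false (E.imp (B.subst θ))

def GammaProjectivelyPreserves (Γ : Set (Form var par)) (A B : Form var par) : Prop :=
  ∀ F : Form var par, GammaProjective Γ F → Prv false (F.imp A) → Prv false (F.imp B)

theorem gammaAdmissible_of_prv {Γ : Set (Form var par)} {A B : Form var par}
    (h : Prv false (A.imp B)) : GammaAdmissible Γ A B :=
  fun _ _ _ θ hE => hE.imp_trans (h.subst θ)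

theorem gammaProjectivelyPreserves_of_prv {Γ : Set (Form var par)} {A B : Form var par}
    (h : Prv false (A.imp B)) : GammaProjectivelyPreserves Γ A B :=
  fun _ _ hF => hF.imp_trans h

theorem prv_of_gammaAdmissible [Infinite par] {Γ : Set (Form var par)} (hΓ : ParSubstClosed Γ)
    {A B : Form var par} (hA : A ∈ Γ) (h : GammaAdmissible Γ A B) : Prv false (A.imp B) := by
  obtain ⟨f, ρ, hv, hp⟩ := exists_renaming (A.imp B)
  have hAf : A.subst (fun x => .p (f x)) ∈ Γ := hΓ A hA _ fun x => ⟨f x, rfl⟩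
  exact Prv.of_subst_renaming hv hp
    (h _ hAf (varFree_subst_params f A) _ (Prv.imp_self _))

theorem gammaProjective_pinned {Γ : Set (Form var par)} (hΓ : ParSubstClosed Γ)
    {A : Form var par} (hA : A ∈ Γ) (f : var → par) : GammaProjective Γ (pinned f A) := by
  classical
  let θ : var → Form var par := fun x => if x ∈ A.vars then .p (f x) else .v x
  have hθA : A.subst θ = A.subst fun x => .p (f x) := by
    rw [subst_eq_bind, subst_eq_bind]
    exact bind_congr (fun x hx => if_pos hx) fun _ _ => rfl
  refine ⟨θ, _, hΓ A hA _ (fun x => ⟨f x, rfl⟩), varFree_subst_params f A, fun x => ?_, ?_⟩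
  · by_cases hx : x ∈ A.vars
    · simp only [θ, if_pos hx]
      exact Prv.imp_trans Prv.andE2 (Prv.conj_imp_of_mem (List.mem_map_of_mem hx))
    · simp only [θ, if_neg hx]
      exact Prv.weaken (Prv.fiff_self _)
  · have hpins : Prv false ((conj (A.vars.map fun x => (Form.p (f x)).fiff (.v x))).subst θ) := by
      rw [subst_eq_bind, bind_conj]
      refine Prv.conj ?_
      simp only [List.map_map, List.mem_map, Function.comp_apply]
      rintro _ ⟨x, hx, rfl⟩
      simp only [fiff, Form.bind, θ, if_pos hx]
      exact Prv.fiff_self _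
    show Prv false (((A.subst θ).and _).fiff _)
    rw [hθA]
    exact Prv.and_intro Prv.andE1 (Prv.imp_and (Prv.imp_self _) (Prv.weaken hpins))

theorem prv_of_gammaProjectivelyPreserves [Infinite par] {Γ : Set (Form var par)}
    (hΓ : ParSubstClosed Γ) {A B : Form var par} (hA : A ∈ Γ)
    (h : GammaProjectivelyPreserves Γ A B) : Prv false (A.imp B) := by
  obtain ⟨f, ρ, hv, hp⟩ := exists_renaming (A.imp B)
  exact Prv.of_pinned_imp (fun x hx => hv x (by simp [vars, hx])) hp
    (h _ (gammaProjective_pinned hΓ hA f) Prv.andE1)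

end Gamma

theorem gamma_admissibility_characterisation_general {var par : Type} [Infinite par]
    (Γ : Set (Form var par))
    (hcl : ∀ A ∈ Γ, ∀ θ : var → Form var par,
      (∀ x : var, ∃ q : par, θ x = Form.p q) → Form.subst θ A ∈ Γ)
    (A B : Form var par) (hA : A ∈ Γ) :
    (Prv false (A.imp B) ↔
      (∀ E ∈ Γ, E.varFree → ∀ θ : var → Form var par,
        Prv false (E.imp (Form.subst θ A)) → Prv false (E.imp (Form.subst θ B)))) ∧
    (Prv false (A.imp B) ↔
      (∀ F : Form var par, GammaProjective Γ F →
        Prv false (F.imp A) → Prv false (F.imp B))) :=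
  ⟨⟨gammaAdmissible_of_prv, prv_of_gammaAdmissible hcl hA⟩,
    ⟨gammaProjectivelyPreserves_of_prv, prv_of_gammaProjectivelyPreserves hcl hA⟩⟩

/-- For `Γ` closed under par-substitutions and `A ∈ Γ`:
derivability, `Γ`-admissibility and projective-`Γ` preservativity coincide. -/
theorem gamma_admissibility_characterisation {var par : Type} [Infinite var] [Infinite par]
    (Γ : Set (Form var par))
    (hcl : ∀ A ∈ Γ, ∀ θ : var → Form var par,
      (∀ x : var, ∃ q : par, θ x = Form.p q) → Form.subst θ A ∈ Γ)
    (A B : Form var par) (hA : A ∈ Γ) :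
    (Prv false (A.imp B) ↔
      (∀ E ∈ Γ, E.varFree → ∀ θ : var → Form var par,
        Prv false (E.imp (Form.subst θ A)) → Prv false (E.imp (Form.subst θ B)))) ∧
    (Prv false (A.imp B) ↔
      (∀ F : Form var par, GammaProjective Γ F →
        Prv false (F.imp A) → Prv false (F.imp B))) :=
  gamma_admissibility_characterisation_general Γ hcl A B hA
end

section
/- In intuitionistic propositional logic with infinitely many parameters, full-language admissibility is trivial: A ⊢∼_ℒ B (for every variable-free E and substitution θ fixing parameters, ⊢ᵢ E → θ(A) implies ⊢ᵢ E → θ(B)) holds if and only if ⊢ᵢ A → B. -/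
namespace FLA

open Classical

variable {var par : Type}

/-- Parameter substitution: acts on parameters, fixes variables. -/
def psubst (η : par → Form var par) : Form var par → Form var par
  | .bot => .bot
  | .v x => .v x
  | .p q => η q
  | .and A B => (psubst η A).and (psubst η B)
  | .or A B => (psubst η A).or (psubst η B)
  | .imp A B => (psubst η A).imp (psubst η B)

theorem prv_subst {cl : Bool} {A : Form var par} (θ : var → Form var par)
    (h : Prv cl A) : Prv cl (A.subst θ) := by
  induction h with
  | mp _ _ ih1 ih2 => exact Prv.mp ih1 ih2
  | k => exact Prv.k
  | s => exact Prv.s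
  | andI => exact Prv.andI
  | andE1 => exact Prv.andE1
  | andE2 => exact Prv.andE2
  | orI1 => exact Prv.orI1
  | orI2 => exact Prv.orI2
  | orE => exact Prv.orE
  | exf => exact Prv.exf
  | dne h => exact Prv.dne h

theorem prv_psubst {cl : Bool} {A : Form var par} (η : par → Form var par)
    (h : Prv cl A) : Prv cl (psubst η A) := by
  induction h with
  | mp _ _ ih1 ih2 => exact Prv.mp ih1 ih2
  | k => exact Prv.k
  | s => exact Prv.s
  | andI => exact Prv.andI
  | andE1 => exact Prv.andE1
  | andE2 => exact Prv.andE2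
  | orI1 => exact Prv.orI1
  | orI2 => exact Prv.orI2
  | orE => exact Prv.orE
  | exf => exact Prv.exf
  | dne h => exact Prv.dne h

theorem prv_id {cl : Bool} (A : Form var par) : Prv cl (A.imp A) :=
  Prv.mp (Prv.mp Prv.s (Prv.k (B := A.imp A))) Prv.k

theorem prv_comp {cl : Bool} {P Q R : Form var par}
    (h1 : Prv cl (P.imp Q)) (h2 : Prv cl (Q.imp R)) : Prv cl (P.imp R) :=
  Prv.mp (Prv.mp Prv.s (Prv.mp Prv.k h2)) h1

noncomputable def varsOf : Form var par → Finset var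
  | .bot => ∅
  | .v x => {x}
  | .p _ => ∅
  | .and A B => varsOf A ∪ varsOf B
  | .or A B => varsOf A ∪ varsOf B
  | .imp A B => varsOf A ∪ varsOf B

noncomputable def parsOf : Form var par → Finset par
  | .bot => ∅
  | .v _ => ∅
  | .p q => {q}
  | .and A B => parsOf A ∪ parsOf B
  | .or A B => parsOf A ∪ parsOf B
  | .imp A B => parsOf A ∪ parsOf B

theorem varFree_subst_p (f : var → par) (C : Form var par) :
    (C.subst (fun x => .p (f x))).varFree := by
  induction C with
  | bot => trivial
  | v x => trivial
  | p q => trivial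
  | and A B ihA ihB => exact ⟨ihA, ihB⟩
  | or A B ihA ihB => exact ⟨ihA, ihB⟩
  | imp A B ihA ihB => exact ⟨ihA, ihB⟩


noncomputable def gf (V : Finset var) (P : Finset par)
    (emb : ↥V ↪ {q : par // q ∉ P}) [Nonempty par] : var → par :=
  fun x => if hx : x ∈ V then (emb ⟨x, hx⟩).1 else Classical.arbitrary par

noncomputable def θf (V : Finset var) (P : Finset par)
    (emb : ↥V ↪ {q : par // q ∉ P}) [Nonempty par] : var → Form var par :=
  fun x => .p (gf V P emb x)

noncomputable def ηf (V : Finset var) (P : Finset par)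
    (emb : ↥V ↪ {q : par // q ∉ P}) : par → Form var par :=
  fun q => if h : ∃ s : ↥V, (emb s).1 = q then .v (Classical.choose h).1 else .p q

theorem recover [Nonempty par] (V : Finset var) (P : Finset par)
    (emb : ↥V ↪ {q : par // q ∉ P}) :
    ∀ C : Form var par, varsOf C ⊆ V → parsOf C ⊆ P →
      psubst (ηf V P emb) (Form.subst (θf V P emb) C) = C := by
  intro C
  induction C with
  | bot => intro _ _; rfl
  | v x =>
    intro hv _
    have hx : x ∈ V := hv (by simp [varsOf])
    show psubst (ηf V P emb) (θf V P emb x) = .v x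
    have hθ : θf V P emb x = .p (emb ⟨x, hx⟩).1 := by
      simp [θf, gf, hx]
    rw [hθ]
    show ηf V P emb (emb ⟨x, hx⟩).1 = .v x
    have hex : ∃ s : ↥V, (emb s).1 = (emb ⟨x, hx⟩).1 := ⟨⟨x, hx⟩, rfl⟩
    have hch : Classical.choose hex = ⟨x, hx⟩ := by
      have := Classical.choose_spec hex
      exact emb.injective (Subtype.ext this)
    simp [ηf, dif_pos hex, hch]
  | p q =>
    intro _ hp
    have hq : q ∈ P := hp (by simp [parsOf])
    show ηf V P emb q = .p q
    have hne : ¬ ∃ s : ↥V, (emb s).1 = q := by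
      rintro ⟨s, hs⟩
      exact (emb s).2 (hs ▸ hq)
    exact dif_neg hne
  | and A B ihA ihB =>
    intro hv hp
    simp only [varsOf, parsOf, Finset.union_subset_iff] at hv hp
    show ((psubst _ (Form.subst _ A)).and _) = _
    rw [ihA hv.1 hp.1, ihB hv.2 hp.2]
  | or A B ihA ihB =>
    intro hv hp
    simp only [varsOf, parsOf, Finset.union_subset_iff] at hv hp
    show ((psubst _ (Form.subst _ A)).or _) = _
    rw [ihA hv.1 hp.1, ihB hv.2 hp.2]
  | imp A B ihA ihB =>
    intro hv hp
    simp only [varsOf, parsOf, Finset.union_subset_iff] at hv hp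
    show ((psubst _ (Form.subst _ A)).imp _) = _
    rw [ihA hv.1 hp.1, ihB hv.2 hp.2]

end FLA

/-- Full-language admissibility is trivial in intuitionistic logic. -/
theorem full_language_admissibility {var par : Type} [Infinite par]
    (A B : Form var par) :
    (∀ (E : Form var par) (θ : var → Form var par), E.varFree →
        Prv false (E.imp (Form.subst θ A)) → Prv false (E.imp (Form.subst θ B))) ↔
    Prv false (A.imp B) := by
  classical
  constructor
  · intro h
    haveI : Nonempty par := inferInstance
    set V : Finset var := FLA.varsOf (A.imp B) with hV
    set P : Finset par := FLA.parsOf (A.imp B) with hP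
    have hinf : Infinite {q : par // q ∉ P} := by
      have hfin : (↑P : Set par).Finite := P.finite_toSet
      have h2 : ((↑P : Set par)ᶜ).Infinite := hfin.infinite_compl
      exact h2.to_subtype
    obtain ⟨emb⟩ : Nonempty ((↥V) ↪ {q : par // q ∉ P}) :=
      ⟨((Fintype.equivFin ↥V).toEmbedding.trans
          Fin.valEmbedding).trans (Infinite.natEmbedding _)⟩
    set θ : var → Form var par := FLA.θf V P emb with hθ
    have hE : (Form.subst θ A).varFree := FLA.varFree_subst_p (FLA.gf V P emb) A
    have h2 := h (Form.subst θ A) θ hE (FLA.prv_id _)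
    have h3 := FLA.prv_psubst (FLA.ηf V P emb) h2
    have e : FLA.psubst (FLA.ηf V P emb)
        ((Form.subst θ A).imp (Form.subst θ B)) = A.imp B :=
      FLA.recover V P emb (A.imp B) (le_refl _) (le_refl _)
    rw [e] at h3
    exact h3
  · intro hAB E θ _ hE
    exact FLA.prv_comp hE (by
      have := FLA.prv_subst θ hAB
      exact this)
end

section
/- Γ-admissibility implies projective-Γ preservativity: if for every variable-free E ∈ Γ and every substitution θ, ⊢ᵢ E → θ(A) implies ⊢ᵢ E → θ(B), then for every Γ-projective formula F with ⊢ᵢ F → A we have ⊢ᵢ F → B. -/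
section Aux
variable {var par : Type}

theorem Prv.pid {cl : Bool} {A : Form var par} : Prv cl (A.imp A) :=
  .mp (.mp (.s (B := A.imp A)) .k) (.k (B := A))

theorem subst_prv {cl : Bool} (θ : var → Form var par) {A : Form var par}
    (h : Prv cl A) : Prv cl (A.subst θ) := by
  induction h with
  | mp _ _ ih1 ih2 => exact .mp ih1 ih2
  | k => exact .k
  | s => exact .s
  | andI => exact .andI
  | andE1 => exact .andE1
  | andE2 => exact .andE2
  | orI1 => exact .orI1
  | orI2 => exact .orI2
  | orE => exact .orE
  | exf => exact .exf
  | dne hc => exact .dne hc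

/-- Derivability from a list of assumptions. -/
inductive Der (Γ : List (Form var par)) : Form var par → Prop where
  | ax {A : Form var par} : Prv false A → Der Γ A
  | hyp {A : Form var par} : A ∈ Γ → Der Γ A
  | mp {A B : Form var par} : Der Γ (A.imp B) → Der Γ A → Der Γ B

theorem Der.weak {Γ Γ' : List (Form var par)} {X : Form var par}
    (hd : Der Γ X) (hs : ∀ A ∈ Γ, A ∈ Γ') : Der Γ' X := by
  induction hd with
  | ax h => exact .ax h
  | hyp h => exact .hyp (hs _ h)
  | mp _ _ ih1 ih2 => exact .mp ih1 ih2

theorem Der.ded {Γ : List (Form var par)} {A B : Form var par}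
    (hd : Der (A :: Γ) B) : Der Γ (A.imp B) := by
  induction hd with
  | ax h => exact .ax (.mp .k h)
  | hyp h =>
    rcases List.mem_cons.mp h with h | h
    · subst h; exact .ax .pid
    · exact .mp (.ax .k) (.hyp h)
  | mp _ _ ih1 ih2 => exact .mp (.mp (.ax .s) ih1) ih2

theorem Der.toPrv {X : Form var par} (hd : Der ([] : List (Form var par)) X) :
    Prv false X := by
  induction hd with
  | ax h => exact h
  | hyp h => simp at h
  | mp _ _ ih1 ih2 => exact .mp ih1 ih2

theorem Der.toPrv1 {F X : Form var par} (hd : Der [F] X) : Prv false (F.imp X) :=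
  hd.ded.toPrv

theorem Der.ofPrv1 {F X : Form var par} (h : Prv false (F.imp X)) : Der [F] X :=
  .mp (.ax h) (.hyp (by simp))

theorem Der.and_intro {Γ : List (Form var par)} {X Y : Form var par}
    (h1 : Der Γ X) (h2 : Der Γ Y) : Der Γ (X.and Y) :=
  .mp (.mp (.ax .andI) h1) h2

theorem Der.and_left {Γ : List (Form var par)} {X Y : Form var par}
    (h : Der Γ (X.and Y)) : Der Γ X := .mp (.ax .andE1) h

theorem Der.and_right {Γ : List (Form var par)} {X Y : Form var par}
    (h : Der Γ (X.and Y)) : Der Γ Y := .mp (.ax .andE2) h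

theorem Der.iff_mp {Γ : List (Form var par)} {X Y : Form var par}
    (h : Der Γ (X.fiff Y)) : Der Γ (X.imp Y) := h.and_left

theorem Der.iff_mpr {Γ : List (Form var par)} {X Y : Form var par}
    (h : Der Γ (X.fiff Y)) : Der Γ (Y.imp X) := h.and_right

theorem Der.comp {Γ : List (Form var par)} {X Y Z : Form var par}
    (h1 : Der Γ (X.imp Y)) (h2 : Der Γ (Y.imp Z)) : Der Γ (X.imp Z) :=
  Der.ded (.mp (h2.weak (fun _ ha => List.mem_cons_of_mem _ ha))
    (.mp (h1.weak (fun _ ha => List.mem_cons_of_mem _ ha)) (.hyp (by simp))))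

theorem Der.iff_refl {Γ : List (Form var par)} {X : Form var par} :
    Der Γ (X.fiff X) := Der.and_intro (.ax .pid) (.ax .pid)

/-- Key lemma: under a projective `F`, every formula is equivalent to its substitution. -/
theorem main_lemma (F : Form var par) (θ : var → Form var par)
    (hv : ∀ x : var, Prv false (F.imp ((θ x).fiff (Form.v x)))) :
    ∀ C : Form var par, Der [F] ((C.subst θ).fiff C) := by
  intro C
  induction C with
  | bot => exact Der.iff_refl
  | p q => exact Der.iff_refl
  | v x => exact Der.ofPrv1 (hv x)
  | and A B ihA ihB =>
    refine Der.and_intro ?_ ?_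
    · refine Der.ded ?_
      have w : ∀ {X : Form var par}, Der [F] X →
          Der [(A.subst θ).and (B.subst θ), F] X :=
        fun d => d.weak (fun _ ha => List.mem_cons_of_mem _ ha)
      have hs : Der [(A.subst θ).and (B.subst θ), F] ((A.subst θ).and (B.subst θ)) :=
        .hyp (by simp)
      exact Der.and_intro (.mp (w ihA).iff_mp hs.and_left)
        (.mp (w ihB).iff_mp hs.and_right)
    · refine Der.ded ?_
      have w : ∀ {X : Form var par}, Der [F] X → Der [A.and B, F] X :=
        fun d => d.weak (fun _ ha => List.mem_cons_of_mem _ ha)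
      have hs : Der [A.and B, F] (A.and B) := .hyp (by simp)
      exact Der.and_intro (.mp (w ihA).iff_mpr hs.and_left)
        (.mp (w ihB).iff_mpr hs.and_right)
  | or A B ihA ihB =>
    refine Der.and_intro ?_ ?_
    · exact .mp (.mp (.ax .orE) (ihA.iff_mp.comp (.ax .orI1)))
        (ihB.iff_mp.comp (.ax .orI2))
    · exact .mp (.mp (.ax .orE) (ihA.iff_mpr.comp (.ax .orI1)))
        (ihB.iff_mpr.comp (.ax .orI2))
  | imp A B ihA ihB =>
    refine Der.and_intro ?_ ?_
    · refine Der.ded (Der.ded ?_)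
      have w : ∀ {X : Form var par}, Der [F] X →
          Der [A, (A.subst θ).imp (B.subst θ), F] X :=
        fun d => d.weak (fun _ ha => by simp at ha; simp [ha])
      have hA : Der [A, (A.subst θ).imp (B.subst θ), F] A := .hyp (by simp)
      have hi : Der [A, (A.subst θ).imp (B.subst θ), F]
          ((A.subst θ).imp (B.subst θ)) := .hyp (by simp)
      exact .mp (w ihB).iff_mp (.mp hi (.mp (w ihA).iff_mpr hA))
    · refine Der.ded (Der.ded ?_)
      have w : ∀ {X : Form var par}, Der [F] X →
          Der [A.subst θ, A.imp B, F] X :=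
        fun d => d.weak (fun _ ha => by simp at ha; simp [ha])
      have hA : Der [A.subst θ, A.imp B, F] (A.subst θ) := .hyp (by simp)
      have hi : Der [A.subst θ, A.imp B, F] (A.imp B) := .hyp (by simp)
      exact .mp (w ihB).iff_mpr (.mp hi (.mp (w ihA).iff_mp hA))

end Aux

/-- `Γ`-admissibility implies projective-`Γ` preservativity. -/
theorem gamma_adms_implies_proj_pres {var par : Type}
    (Γ : Set (Form var par)) (A B : Form var par)
    (h : ∀ E ∈ Γ, E.varFree → ∀ θ : var → Form var par,
      Prv false (E.imp (Form.subst θ A)) → Prv false (E.imp (Form.subst θ B))) :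
    ∀ F : Form var par, GammaProjective Γ F →
      Prv false (F.imp A) → Prv false (F.imp B) := by
  rintro F ⟨θ, E, hEΓ, hEvf, hv, hFE⟩ hFA
  -- From F ⊢ F → A, substitution gives ⊢ θ(F) → θ(A)
  have hsub : Prv false ((F.subst θ).imp (A.subst θ)) := subst_prv θ hFA
  -- E → θ(F)
  have hEθF : Prv false (E.imp (F.subst θ)) := .mp .andE2 hFE
  have hEA : Prv false (E.imp (A.subst θ)) :=
    (Der.mp (.ax hsub) (Der.ofPrv1 hEθF)).toPrv1
  have hEB : Prv false (E.imp (B.subst θ)) := h E hEΓ hEvf θ hEA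
  -- Now reason under F
  have hFiff := main_lemma F θ hv
  have dF : Der [F] F := .hyp (by simp)
  have dθF : Der [F] (F.subst θ) := .mp (hFiff F).iff_mpr dF
  have dE : Der [F] E := .mp (.ax (.mp (.andE1) hFE)) dθF
  have dθB : Der [F] (B.subst θ) := .mp (.ax hEB) dE
  have dB : Der [F] B := .mp (hFiff B).iff_mp dθB
  exact dB.toPrv1
end
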